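/- arXiv:2105.03074 — 3 statements merged into one kernel-verified Lean document; each statement's English description precedes it below -/
import Mathlib

section
/- Let p be a prime, w a positive integer, and ω_p = e^{2πi/p}. Let S ⊆ F_{p^w} with |S| = s ≤ p^w − 1. Write s = s₁·p^{w−1} + s₂ with 0 ≤ s₁ ≤ p−1 and 0 ≤ s₂ ≤ p^{w−1}−1. Then |∑_{x∈S} ω_p^{Tr(x)}| ≤ |s₂·∑_{i=0}^{s₁} ω_p^i + (p^{w−1}−s₂)·∑_{i=0}^{s₁−1} ω_p^i| ≤ p^{w−1}·sin(πs/p^w)/sin(π/p), where Tr denotes the field trace from F_{p^w} to F_p. -/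
/-!
Grouping `S` by trace, the sum becomes `∑ᵢ aᵢ ωⁱ` over `i ∈ ZMod p`, with `aᵢ = #(S ∩ Tᵢ)`,
`0 ≤ aᵢ ≤ p^(w-1)` and `∑ aᵢ = s`. After a rotation by a unit `e^{iφ}` its norm is
`∑ aᵢ cos (φ + 2πi/p)`, a linear function of `a` which (bathtub principle) is largest when
the `s₁` largest cosines get the full weight `p^(w-1)` and the next one gets `s₂`. Up to a
cyclic shift and possibly the reflection `i ↦ -i`, these cosines sit at `i = 0, …, s₁`, so
the bound is the real part of a rotation of `p^(w-1) (1 + ⋯ + ω^(s₁-1)) + s₂ ω^s₁`.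

For the second bound multiply by `ω - 1`: the two geometric sums become `ω^(s₁+1) - 1` and
`ω^s₁ - 1`, of norms `2 sin ((s₁+1)π/p)` and `2 sin (s₁π/p)`, and concavity of `sin` on
`[0, π]` merges the two terms.
-/

open Finset Classical

/-- ω_p = e^{2πi/p}. -/
noncomputable def omg (p : ℕ) : ℂ := Complex.exp (2 * Real.pi * Complex.I / p)

/-- ω_p^{Tr(x)}, where Tr is the field trace from `K` (a field of cardinality `p^w`)
to `ZMod p`. -/
noncomputable def chr (p : ℕ) [Fact p.Prime] (K : Type*) [Field K] [Algebra (ZMod p) K]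
    (x : K) : ℂ := omg p ^ (Algebra.trace (ZMod p) K x).val

open Complex
open scoped Real

lemma omg_pow (p n : ℕ) : omg p ^ n = exp (↑(2 * π * n / p) * I) := by
  rw [omg, ← exp_nat_mul]; push_cast; ring_nf

lemma re_exp_mul_omg_pow (p n : ℕ) (γ : ℝ) :
    (exp (γ * I) * omg p ^ n).re = Real.cos (γ + 2 * π * n / p) := by
  rw [omg_pow, ← exp_add, ← add_mul, ← ofReal_add, exp_ofReal_mul_I_re]

lemma norm_omg_pow_sub_one {p n : ℕ} (hn : n ≤ p) :
    ‖omg p ^ n - 1‖ = 2 * Real.sin (π * n / p) := by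
  have h0 : 0 ≤ π * n / p := by positivity
  have hπ : π * n / p ≤ π := by
    rcases Nat.eq_zero_or_pos p with rfl | hp
    · simp [Real.pi_nonneg]
    · rw [div_le_iff₀ (by positivity)]
      exact mul_le_mul_of_nonneg_left (by exact_mod_cast hn) Real.pi_nonneg
  rw [omg_pow, mul_comm _ I, norm_exp_I_mul_ofReal_sub_one, norm_mul, Real.norm_two,
    show 2 * π * n / p / 2 = π * n / p by ring,
    Real.norm_of_nonneg (Real.sin_nonneg_of_nonneg_of_le_pi h0 hπ)]

lemma ZMod.sum_eq_sum_range {M : Type*} [AddCommMonoid M] (p : ℕ) [NeZero p] (f : ZMod p → M) :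
    ∑ i, f i = ∑ n ∈ range p, f n :=
  sum_nbij' ZMod.val (↑) (by simp [ZMod.val_lt]) (by simp) (by simp)
    (fun n hn => ZMod.val_cast_of_lt (mem_range.1 hn)) (by simp)

lemma ZMod.sum_eq_sum_range_add {M : Type*} [AddCommMonoid M] (p : ℕ) [NeZero p]
    (f : ZMod p → M) (m : ℤ) : ∑ i, f i = ∑ n ∈ range p, f (n + m) := by
  rw [← Fintype.sum_equiv (Equiv.addRight (m : ZMod p)) _ _ fun _ => rfl, ZMod.sum_eq_sum_range]
  rfl

lemma ZMod.sum_eq_sum_range_sub {M : Type*} [AddCommMonoid M] (p : ℕ) [NeZero p]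
    (f : ZMod p → M) (m : ℤ) : ∑ i, f i = ∑ n ∈ range p, f (m - n) := by
  rw [← Fintype.sum_equiv (Equiv.subLeft (m : ZMod p)) _ _ fun _ => rfl, ZMod.sum_eq_sum_range]
  rfl

lemma exists_int_abs_sub_mul_le (x : ℝ) {c : ℝ} (hc : 0 < c) :
    ∃ k : ℤ, |x - k * c| ≤ c / 2 := by
  refine ⟨round (x / c), ?_⟩
  have h := abs_sub_round (x / c)
  rw [show x - round (x / c) * c = (x / c - round (x / c)) * c by field_simp, abs_mul,
    abs_of_pos hc]
  nlinarith

lemma cos_add_two_pi_mul_val_div (p : ℕ) [NeZero p] (φ : ℝ) (m : ℤ) :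
    Real.cos (φ + 2 * π * (m : ZMod p).val / p) = Real.cos (φ + 2 * π * m / p) := by
  have hval : ((m : ZMod p).val : ℝ) = m + (-(m / p) : ℤ) * p := by
    exact_mod_cast (by rw [ZMod.val_intCast, Int.emod_def]; ring :
      ((m : ZMod p).val : ℤ) = m + (-(m / p)) * p)
  have hp : (p : ℝ) ≠ 0 := Nat.cast_ne_zero.2 (NeZero.ne p)
  rw [hval, show φ + 2 * π * (m + (-(m / p) : ℤ) * p) / p
      = φ + 2 * π * m / p + (-(m / p) : ℤ) * (2 * π) by field_simp; ring]
  exact Real.cos_add_int_mul_two_pi _ _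

lemma sum_mul_le_of_bathtub {ι : Type*} {U A : Finset ι} (hAU : A ⊆ U) {a c : ι → ℝ}
    {M s₂ : ℝ} (t : ι) (ha₀ : ∀ i ∈ U \ A, 0 ≤ a i) (haM : ∀ i ∈ A, a i ≤ M)
    (hsum : ∑ i ∈ U, a i = #A * M + s₂) (hcA : ∀ i ∈ A, c t ≤ c i)
    (hcU : ∀ i ∈ U \ A, c i ≤ c t) :
    ∑ i ∈ U, a i * c i ≤ M * ∑ i ∈ A, c i + s₂ * c t := by
  have hA : ∑ i ∈ A, (a i - M) * (c i - c t) ≤ 0 :=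
    sum_nonpos fun i hi => mul_nonpos_of_nonpos_of_nonneg (by linarith [haM i hi])
      (by linarith [hcA i hi])
  have hUA : ∑ i ∈ U \ A, a i * (c i - c t) ≤ 0 :=
    sum_nonpos fun i hi => mul_nonpos_of_nonneg_of_nonpos (ha₀ i hi) (by linarith [hcU i hi])
  have hsplit : ∑ i ∈ U, a i * c i - (M * ∑ i ∈ A, c i + s₂ * c t)
      = ∑ i ∈ A, (a i - M) * (c i - c t) + ∑ i ∈ U \ A, a i * (c i - c t) := by
    have hU := sum_sdiff hAU (f := fun i => a i * (c i - c t))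
    simp only [mul_sub, sub_mul, sum_sub_distrib, ← sum_mul, ← mul_sum, sum_const,
      nsmul_eq_mul] at hU ⊢
    linear_combination -hU + c t * hsum
  linarith

lemma Real.cos_le_cos_of_le_of_le_two_pi_sub {x y : ℝ} (hy : 0 ≤ y) (hyx : y ≤ x)
    (hx : x ≤ 2 * π - y) : Real.cos x ≤ Real.cos y := by
  rcases le_or_gt x π with hxπ | hxπ
  · exact Real.cos_le_cos_of_nonneg_of_le_pi hy hxπ hyx
  · rw [← Real.cos_two_pi_sub]
    exact Real.cos_le_cos_of_nonneg_of_le_pi hy (by linarith) (by linarith)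

section CenteredArc

/- The midpoint `γ + s₁π/p` of the arc of angles `γ + 2πn/p`, `n ≤ s₁`, lies in
`[0, π/p]`; then these are the `s₁ + 1` angles `γ + 2πn/p`, `n < p`, closest to `0`
modulo `2π`, and `n = s₁` is the farthest of them. -/
variable {p s₁ : ℕ} {γ : ℝ} (hs₁ : s₁ < p) (hγ₀ : 0 ≤ γ + s₁ * (π / p))
  (hγ₁ : γ + s₁ * (π / p) ≤ π / p)
include hs₁ hγ₀ hγ₁

lemma cos_le_cos_of_mem_arc {n : ℕ} (hn : n ≤ s₁) :
    Real.cos (γ + 2 * π * s₁ / p) ≤ Real.cos (γ + 2 * π * n / p) := by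
  set β := π / p
  have hp : (0 : ℝ) < p := by exact_mod_cast (Nat.zero_le s₁).trans_lt hs₁
  have hβ : 0 ≤ β := by positivity
  have hpβ : (s₁ + 1 : ℝ) * β ≤ π := by
    rw [mul_div_assoc', div_le_iff₀ hp, mul_comm π]
    exact mul_le_mul_of_nonneg_right (show (s₁ + 1 : ℝ) ≤ p by exact_mod_cast hs₁)
      Real.pi_nonneg
  have hnβ : (n : ℝ) * β ≤ s₁ * β := mul_le_mul_of_nonneg_right (by exact_mod_cast hn) hβ
  have hnβ₀ : 0 ≤ (n : ℝ) * β := by positivity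
  have h2 : ∀ k : ℝ, 2 * π * k / p = 2 * k * β := fun k => by ring
  rw [h2, h2, ← Real.cos_abs (γ + 2 * n * β)]
  refine Real.cos_le_cos_of_nonneg_of_le_pi (abs_nonneg _) (by linarith) (abs_le.2 ⟨?_, ?_⟩)
    <;> linarith

lemma cos_le_cos_of_not_mem_arc {n : ℕ} (hn : s₁ ≤ n) (hnp : n < p) :
    Real.cos (γ + 2 * π * n / p) ≤ Real.cos (γ + 2 * π * s₁ / p) := by
  set β := π / p
  have hp : (0 : ℝ) < p := by exact_mod_cast (Nat.zero_le s₁).trans_lt hs₁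
  have hβ : 0 ≤ β := by positivity
  have hpβ : (p : ℝ) * β = π := mul_div_cancel₀ π hp.ne'
  have hnβ : (s₁ : ℝ) * β ≤ n * β := mul_le_mul_of_nonneg_right (by exact_mod_cast hn) hβ
  have hnβ' : (n : ℝ) * β ≤ (p - 1) * β :=
    mul_le_mul_of_nonneg_right (by rw [le_sub_iff_add_le]; exact_mod_cast hnp) hβ
  have hs₁β : 0 ≤ (s₁ : ℝ) * β := by positivity
  have h2 : ∀ k : ℝ, 2 * π * k / p = 2 * k * β := fun k => by ring
  rw [h2, h2]
  apply Real.cos_le_cos_of_le_of_le_two_pi_sub <;> nlinarith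

lemma sum_mul_cos_le_of_centered {a : ℕ → ℝ} {M s₂ : ℝ} (ha₀ : ∀ n, 0 ≤ a n)
    (haM : ∀ n, a n ≤ M) (hsum : ∑ n ∈ range p, a n = s₁ * M + s₂) :
    ∑ n ∈ range p, a n * Real.cos (γ + 2 * π * n / p)
      ≤ ‖(M : ℂ) * ∑ n ∈ range s₁, omg p ^ n + s₂ * omg p ^ s₁‖ := by
  calc _ ≤ M * ∑ n ∈ range s₁, Real.cos (γ + 2 * π * n / p)
          + s₂ * Real.cos (γ + 2 * π * s₁ / p) := by
        refine sum_mul_le_of_bathtub (range_subset_range.2 hs₁.le) s₁ (fun n _ => ha₀ n)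
          (fun n _ => haM n) (by rwa [card_range]) (fun n hn => ?_) (fun n hn => ?_)
        · exact cos_le_cos_of_mem_arc hs₁ hγ₀ hγ₁ (mem_range.1 hn).le
        · simp only [mem_sdiff, mem_range, not_lt] at hn
          exact cos_le_cos_of_not_mem_arc hs₁ hγ₀ hγ₁ hn.2 hn.1
    _ = (exp (γ * I) * ((M : ℂ) * ∑ n ∈ range s₁, omg p ^ n + s₂ * omg p ^ s₁)).re := by
        simp only [mul_add, mul_sum, mul_left_comm _ (M : ℂ), mul_left_comm _ (s₂ : ℂ),
          add_re, re_ofReal_mul, re_sum, re_exp_mul_omg_pow]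
    _ ≤ _ := re_le_norm _
    _ = _ := by rw [norm_mul, norm_exp_ofReal_mul_I, one_mul]

end CenteredArc

lemma sum_mul_cos_le {p s₁ : ℕ} [NeZero p] (hs₁ : s₁ < p) {a : ZMod p → ℝ}
    {M s₂ : ℝ} (ha₀ : ∀ i, 0 ≤ a i) (haM : ∀ i, a i ≤ M) (hsum : ∑ i, a i = s₁ * M + s₂)
    (φ : ℝ) :
    ∑ i, a i * Real.cos (φ + 2 * π * i.val / p)
      ≤ ‖(M : ℂ) * ∑ n ∈ range s₁, omg p ^ n + s₂ * omg p ^ s₁‖ := by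
  set β := π / p
  have hβ : 0 < β := by have := NeZero.pos p; positivity
  -- Shift the arc midpoint `φ + s₁π/p` to within `π/p` of `0`; if it lands below `0`,
  -- reflect instead.
  obtain ⟨k, hk⟩ := exists_int_abs_sub_mul_le (φ + s₁ * β) (by positivity : 0 < 2 * β)
  rw [mul_div_cancel_left₀ _ two_ne_zero, abs_le] at hk
  rcases le_total 0 (φ + s₁ * β - k * (2 * β)) with hθ | hθ
  · rw [ZMod.sum_eq_sum_range_add p _ (-k)] at hsum ⊢
    have hcos : ∀ n : ℕ, Real.cos (φ + 2 * π * ((n : ZMod p) + ((-k : ℤ) : ZMod p)).val / p)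
        = Real.cos ((φ - 2 * k * β) + 2 * π * n / p) := fun n => by
      rw [show (n : ZMod p) + ((-k : ℤ) : ZMod p) = ((n - k : ℤ) : ZMod p) by push_cast; ring,
        cos_add_two_pi_mul_val_div]
      congr 1; push_cast; ring
    simp only [hcos]
    exact sum_mul_cos_le_of_centered hs₁ (by linarith) (by linarith) (fun _ => ha₀ _)
      (fun _ => haM _) hsum
  · rw [ZMod.sum_eq_sum_range_sub p _ (s₁ - k)] at hsum ⊢
    have hcos : ∀ n : ℕ, Real.cos (φ + 2 * π * (((s₁ - k : ℤ) : ZMod p) - n).val / p)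
        = Real.cos ((-φ - 2 * (s₁ - k) * β) + 2 * π * n / p) := fun n => by
      rw [show ((s₁ - k : ℤ) : ZMod p) - n = ((s₁ - k - n : ℤ) : ZMod p) by push_cast; ring,
        cos_add_two_pi_mul_val_div, ← Real.cos_neg]
      congr 1; push_cast; ring
    simp only [hcos]
    exact sum_mul_cos_le_of_centered hs₁ (by linarith) (by linarith) (fun _ => ha₀ _)
      (fun _ => haM _) hsum

lemma norm_sum_mul_omg_pow_le {p s₁ : ℕ} [NeZero p] (hs₁ : s₁ < p) {a : ZMod p → ℝ}
    {M s₂ : ℝ} (ha₀ : ∀ i, 0 ≤ a i) (haM : ∀ i, a i ≤ M) (hsum : ∑ i, a i = s₁ * M + s₂) :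
    ‖∑ i, (a i : ℂ) * omg p ^ i.val‖
      ≤ ‖(M : ℂ) * ∑ n ∈ range s₁, omg p ^ n + s₂ * omg p ^ s₁‖ := by
  set z := ∑ i, (a i : ℂ) * omg p ^ i.val
  have hz : exp (↑(-arg z) * I) * z = ‖z‖ := by
    nth_rw 2 [← norm_mul_exp_arg_mul_I z]
    rw [mul_left_comm, ← exp_add, ofReal_neg, neg_mul, neg_add_cancel, exp_zero, mul_one]
  rw [← ofReal_re ‖z‖, ← hz, mul_sum, re_sum]
  convert sum_mul_cos_le hs₁ ha₀ haM hsum (-arg z) using 2 with i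
  rw [mul_left_comm, re_ofReal_mul, re_exp_mul_omg_pow]

lemma sum_chr_eq_sum_card_mul (p : ℕ) [Fact p.Prime] (K : Type*) [Field K]
    [Algebra (ZMod p) K] (S : Finset K) :
    ∑ x ∈ S, chr p K x = ∑ i : ZMod p,
      ((#{x ∈ S | Algebra.trace (ZMod p) K x = i} : ℝ) : ℂ) * omg p ^ i.val := by
  unfold chr
  rw [← sum_fiberwise' S (Algebra.trace (ZMod p) K) fun i => omg p ^ i.val]
  simp only [sum_const, nsmul_eq_mul, ofReal_natCast]

lemma card_trace_fiber {p w : ℕ} [Fact p.Prime] (hw : 1 ≤ w) {K : Type*} [Field K] [Fintype K]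
    [Algebra (ZMod p) K] (hK : Fintype.card K = p ^ w) (i : ZMod p) :
    #{x : K | Algebra.trace (ZMod p) K x = i} = p ^ (w - 1) := by
  have hsurj := Algebra.trace_surjective (ZMod p) K
  have hfiber (j : ZMod p) : #{x : K | Algebra.trace (ZMod p) K x = j}
      = #{x : K | Algebra.trace (ZMod p) K x = i} :=
    AddMonoidHom.card_fiber_eq_of_mem_range (Algebra.trace (ZMod p) K).toAddMonoidHom
      (hsurj j) (hsurj i)
  have hcard : p * p ^ (w - 1) = p * #{x : K | Algebra.trace (ZMod p) K x = i} := by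
    rw [← pow_succ', Nat.sub_add_cancel hw, ← hK, ← card_univ,
      card_eq_sum_card_fiberwise fun x _ => mem_univ (Algebra.trace (ZMod p) K x)]
    simp only [hfiber, sum_const, card_univ, ZMod.card, smul_eq_mul]
  exact (Nat.eq_of_mul_eq_mul_left (Fact.out : p.Prime).pos hcard).symm

lemma mul_sin_add_mul_sin_le {x y a b : ℝ} (hx : x ∈ Set.Icc 0 π) (hy : y ∈ Set.Icc 0 π)
    (ha : 0 ≤ a) (hb : 0 ≤ b) :
    a * Real.sin x + b * Real.sin y ≤ (a + b) * Real.sin ((a * x + b * y) / (a + b)) := by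
  rcases (add_nonneg ha hb).eq_or_lt with hab | hab
  · obtain ⟨rfl, rfl⟩ : a = 0 ∧ b = 0 := ⟨by linarith, by linarith⟩
    simp
  have h := strictConcaveOn_sin_Icc.concaveOn.2 hx hy (div_nonneg ha hab.le)
    (div_nonneg hb hab.le) (by field_simp)
  simp only [smul_eq_mul] at h
  rw [add_div, mul_div_right_comm a x, mul_div_right_comm b y]
  calc a * Real.sin x + b * Real.sin y
      = (a + b) * (a / (a + b) * Real.sin x + b / (a + b) * Real.sin y) := by
        field_simp
    _ ≤ _ := mul_le_mul_of_nonneg_left h hab.le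

lemma norm_mul_geom_sum_add_mul_geom_sum_le {p M s₁ s₂ : ℕ} (hp : 2 ≤ p) (hs₁ : s₁ < p)
    (hM : 0 < M) (hs₂ : s₂ ≤ M) :
    ‖(s₂ : ℂ) * ∑ i ∈ range (s₁ + 1), omg p ^ i
        + ((M - s₂ : ℕ) : ℂ) * ∑ i ∈ range s₁, omg p ^ i‖
      ≤ M * Real.sin (π * (s₁ * M + s₂) / (p * M)) / Real.sin (π / p) := by
  have hp' : (2 : ℝ) ≤ p := by exact_mod_cast hp
  have hM' : (M : ℝ) ≠ 0 := by positivity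
  have hsin : 0 < Real.sin (π / p) := by
    apply Real.sin_pos_of_pos_of_lt_pi (by positivity)
    rw [div_lt_iff₀ (by positivity)]
    nlinarith [Real.pi_pos]
  have hIcc {n : ℕ} (hn : n ≤ p) : π * n / p ∈ Set.Icc 0 π := by
    refine ⟨by positivity, ?_⟩
    rw [div_le_iff₀ (by positivity)]
    exact mul_le_mul_of_nonneg_left (show (n : ℝ) ≤ p by exact_mod_cast hn) Real.pi_nonneg
  have hmul : ((s₂ : ℂ) * ∑ i ∈ range (s₁ + 1), omg p ^ i
      + ((M - s₂ : ℕ) : ℂ) * ∑ i ∈ range s₁, omg p ^ i) * (omg p ^ 1 - 1)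
      = s₂ * (omg p ^ (s₁ + 1) - 1) + ((M - s₂ : ℕ) : ℂ) * (omg p ^ s₁ - 1) := by
    rw [pow_one, add_mul, mul_assoc, mul_assoc, geom_sum_mul, geom_sum_mul]
  have hconc := mul_sin_add_mul_sin_le (hIcc hs₁.le) (hIcc (Nat.succ_le_of_lt hs₁))
    (sub_nonneg.2 (by exact_mod_cast hs₂ : (s₂ : ℝ) ≤ M)) (Nat.cast_nonneg s₂)
  rw [sub_add_cancel, show ((M - s₂) * (π * s₁ / p) + s₂ * (π * ↑(s₁ + 1) / p)) / M
    = π * (s₁ * M + s₂) / (p * M) by push_cast; field_simp; ring_nf] at hconc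
  rw [le_div_iff₀ hsin]
  refine le_of_mul_le_mul_left ?_ (two_pos : (0 : ℝ) < 2)
  calc 2 * (‖_‖ * Real.sin (π / p))
      = ‖(s₂ : ℂ) * (omg p ^ (s₁ + 1) - 1)
          + ((M - s₂ : ℕ) : ℂ) * (omg p ^ s₁ - 1)‖ := by
        rw [← hmul, norm_mul, norm_omg_pow_sub_one (by omega), Nat.cast_one, mul_one]
        ring
    _ ≤ s₂ * (2 * Real.sin (π * ↑(s₁ + 1) / p))
          + (M - s₂) * (2 * Real.sin (π * s₁ / p)) := by
        refine (norm_add_le _ _).trans_eq ?_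
        rw [norm_mul, norm_mul, norm_omg_pow_sub_one (by omega), norm_omg_pow_sub_one hs₁.le,
          Complex.norm_natCast, Complex.norm_natCast, Nat.cast_sub hs₂]
    _ ≤ 2 * (M * Real.sin (π * (s₁ * M + s₂) / (p * M))) := by linarith

theorem stmt0_general (p w s s₁ s₂ : ℕ) [Fact p.Prime] (hw : 1 ≤ w)
    (K : Type) [Field K] [Fintype K] [Algebra (ZMod p) K]
    (hK : Fintype.card K = p ^ w)
    (S : Finset K) (hS : S.card = s)
    (hsplit : s = s₁ * p ^ (w - 1) + s₂)
    (hs₁ : s₁ ≤ p - 1) (hs₂ : s₂ ≤ p ^ (w - 1) - 1) :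
    ‖∑ x ∈ S, chr p K x‖ ≤
      ‖(s₂ : ℂ) * ∑ i ∈ Finset.range (s₁ + 1), omg p ^ i
        + ((p ^ (w - 1) - s₂ : ℕ) : ℂ) * ∑ i ∈ Finset.range s₁, omg p ^ i‖ ∧
    ‖(s₂ : ℂ) * ∑ i ∈ Finset.range (s₁ + 1), omg p ^ i
        + ((p ^ (w - 1) - s₂ : ℕ) : ℂ) * ∑ i ∈ Finset.range s₁, omg p ^ i‖ ≤
      (p : ℝ) ^ (w - 1) * Real.sin (Real.pi * s / p ^ w) / Real.sin (Real.pi / p) := by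
  have hp : 2 ≤ p := (Fact.out : p.Prime).two_le
  have hs₁p : s₁ < p := by omega
  have hM : 0 < p ^ (w - 1) := by positivity
  have hs₂M : s₂ ≤ p ^ (w - 1) := by omega
  constructor
  · have hcount (i : ZMod p) : #{x ∈ S | Algebra.trace (ZMod p) K x = i} ≤ p ^ (w - 1) :=
      card_trace_fiber hw hK i ▸ card_le_card (filter_subset_filter _ (subset_univ S))
    have hsum : ∑ i : ZMod p, (#{x ∈ S | Algebra.trace (ZMod p) K x = i} : ℝ)
        = s₁ * (p ^ (w - 1) : ℕ) + s₂ := by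
      rw [← Nat.cast_sum, ← card_eq_sum_card_fiberwise fun x _ => mem_univ _, hS, hsplit]
      push_cast; ring
    have key := norm_sum_mul_omg_pow_le hs₁p (fun _ => Nat.cast_nonneg _)
      (fun i => Nat.cast_le.2 (hcount i)) hsum
    rw [sum_chr_eq_sum_card_mul]
    convert key using 2
    rw [sum_range_succ, Nat.cast_sub hs₂M]
    push_cast; ring
  · convert norm_mul_geom_sum_add_mul_geom_sum_le hp hs₁p hM hs₂M using 3
    · push_cast; ring
    · have hpw : p ^ w = p * p ^ (w - 1) := by rw [← pow_succ', Nat.sub_add_cancel hw]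
      rw [hsplit, ← Nat.cast_pow, hpw]
      push_cast; ring

/-- bound on sums of `p`-th roots of unity indexed by traces. -/
theorem stmt0 (p w s s₁ s₂ : ℕ) [Fact p.Prime] (hw : 1 ≤ w)
    (K : Type) [Field K] [Fintype K] [Algebra (ZMod p) K]
    (hK : Fintype.card K = p ^ w)
    (S : Finset K) (hS : S.card = s)
    (hs : s ≤ p ^ w - 1) (hsplit : s = s₁ * p ^ (w - 1) + s₂)
    (hs₁ : s₁ ≤ p - 1) (hs₂ : s₂ ≤ p ^ (w - 1) - 1) :
    ‖∑ x ∈ S, chr p K x‖ ≤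
      ‖(s₂ : ℂ) * ∑ i ∈ Finset.range (s₁ + 1), omg p ^ i
        + ((p ^ (w - 1) - s₂ : ℕ) : ℂ) * ∑ i ∈ Finset.range s₁, omg p ^ i‖ ∧
    ‖(s₂ : ℂ) * ∑ i ∈ Finset.range (s₁ + 1), omg p ^ i
        + ((p ^ (w - 1) - s₂ : ℕ) : ℂ) * ∑ i ∈ Finset.range s₁, omg p ^ i‖ ≤
      (p : ℝ) ^ (w - 1) * Real.sin (Real.pi * s / p ^ w) / Real.sin (Real.pi / p) :=
  stmt0_general p w s s₁ s₂ hw K hK S hS hsplit hs₁ hs₂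
end

section
/- Let p be a prime, w ≥ 1, μ > 0 with 2^μ a positive integer, and c_μ = 2^μ·sin(π/2^μ)/(p·sin(π/p)). For any sets A₁,…,A_{2^μ} ⊆ F_{p^w} with ∑_{i=1}^{2^μ} |A_i| = p^w: for every nonzero α ∈ F_{p^w}, ∑_{i=1}^{2^μ} |1̂_{A_i}(α)| ≤ c_μ, while ∑_{i=1}^{2^μ} |1̂_{A_i}(0)| = 1. -/
/-! For `α ≠ 0` the map `x ↦ Tr(αx)` is onto `𝔽_p`, so each of its fibres has `N = q/p` points
and `q · 1̂_A(α) = ∑ⱼ mⱼ ωʲ` with `0 ≤ mⱼ ≤ N` and `∑ⱼ mⱼ = |A|`. Slicing at the levels `u < N`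
writes this as `N` sums over the sets `{j | u < mⱼ}` of distinct `p`-th roots of unity. By Lev's
bound a sum of `k` distinct roots is at most `sin(kπ/p)/sin(π/p)` in modulus: against any
direction, the `k` roots closest to it do best, and they form an arc, whose sum is a geometric
series. Concavity of `sin` on `[0, π]` then gives `|1̂_A(α)| ≤ sin(π|A|/q)/(p sin(π/p))`, and,
applied once more to the `2^μ` sets with `∑ |Aᵢ| = q`, the bound `2^μ sin(π/2^μ)/(p sin(π/p))`. -/

open Finset Classical

/-- Fourier coefficient of the indicator of `A ⊆ K` at `α`. -/
noncomputable def ihat (p : ℕ) [Fact p.Prime] (K : Type*) [Field K] [Fintype K]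
    [Algebra (ZMod p) K] (A : Finset K) (α : K) : ℂ :=
  (1 / (Fintype.card K : ℂ)) * ∑ x : K, (if x ∈ A then 1 else 0) * chr p K (α * x)

open Real

theorem Finset.sum_le_sum_of_card_eq_of_forall_le {ι : Type*} [DecidableEq ι] {s t : Finset ι}
    (f : ι → ℝ) (c : ℝ) (hst : #s = #t) (hs : ∀ i ∈ s, i ∉ t → f i ≤ c)
    (ht : ∀ i ∈ t, i ∉ s → c ≤ f i) : ∑ i ∈ s, f i ≤ ∑ i ∈ t, f i := by
  have hs' : ∑ i ∈ s \ t, f i ≤ #(s \ t) * c := by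
    simpa using sum_le_card_nsmul (s \ t) f c fun i hi => hs i (mem_sdiff.1 hi).1 (mem_sdiff.1 hi).2
  have ht' : #(t \ s) * c ≤ ∑ i ∈ t \ s, f i := by
    simpa using card_nsmul_le_sum (t \ s) f c fun i hi => ht i (mem_sdiff.1 hi).1 (mem_sdiff.1 hi).2
  rw [card_sdiff_comm hst] at hs'
  have := sum_sdiff_sub_sum_sdiff (s₁ := s) (s₂ := t) (f := f)
  linarith

theorem Real.sin_pi_div_natCast_pos {n : ℕ} (hn : 1 < n) : 0 < sin (π / n) :=
  sin_pos_of_pos_of_lt_pi (div_pos pi_pos (by positivity))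
    (div_lt_self pi_pos (by exact_mod_cast hn))

theorem Real.cos_le_cos_of_le_of_le_two_pi_sub_s5 {b y : ℝ} (hb₀ : 0 ≤ b)
    (hby : b ≤ y) (hy : y ≤ 2 * π - b) : cos y ≤ cos b := by
  rcases le_total y π with hyπ | hπy
  · exact cos_le_cos_of_nonneg_of_le_pi hb₀ hyπ hby
  · rw [← cos_two_pi_sub]
    exact cos_le_cos_of_nonneg_of_le_pi hb₀ (by linarith) (by linarith)

theorem Real.sum_range_cos_le_sin_div_sin {x : ℝ} (hx₀ : 0 < x) (hx : x < π) {k : ℕ}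
    (hkx : k * x ≤ π) (θ : ℝ) : ∑ n ∈ range k, cos (2 * x * n - θ) ≤ sin (k * x) / sin x := by
  rw [le_div_iff₀ (sin_pos_of_pos_of_lt_pi hx₀ hx)]
  have h := sin_mul_sum_cos k (2 * x) (-θ)
  rw [show 2 * x / 2 = x by ring, show (k : ℝ) * (2 * x) / 2 = k * x by ring] at h
  simp only [← sub_eq_add_neg] at h
  rw [mul_comm, h]
  exact mul_le_of_le_one_right (sin_nonneg_of_nonneg_of_le_pi (by positivity) hkx) (cos_le_one _)

theorem sum_cos_le_sin_div_sin {p : ℕ} (hp : 1 < p) {s : Finset ℕ} (hs : s ⊆ range p) {θ : ℝ}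
    (hθ₁ : (#s - 2) * (π / p) < θ) (hθ₂ : θ ≤ #s * (π / p)) :
    ∑ n ∈ s, cos (2 * (π / p) * n - θ) ≤ sin (#s * (π / p)) / sin (π / p) := by
  set x := π / p with hx
  set k := #s
  have hp₀ : (1 : ℝ) < p := by exact_mod_cast hp
  have hx₀ : 0 < x := by positivity
  have hxp : p * x = π := by rw [hx]; field_simp
  have hxπ : x < π := by nlinarith
  have hkp : (k : ℝ) ≤ p := by exact_mod_cast (card_le_card hs).trans (card_range p).le
  have hkx : k * x ≤ π := by nlinarith
  calc ∑ n ∈ s, cos (2 * x * n - θ)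
      ≤ ∑ n ∈ range k, cos (2 * x * n - θ) := by
        -- by the choice of `θ`, the level `cos (k * x)` separates `n < k` from `k ≤ n < p`
        refine sum_le_sum_of_card_eq_of_forall_le _ (cos (k * x)) (card_range k).symm ?_ ?_
        · intro n hns hnk
          have hnp : (n : ℝ) + 1 ≤ p := by exact_mod_cast mem_range.1 (hs hns)
          have hkn : (k : ℝ) ≤ n := by exact_mod_cast not_lt.1 (mt mem_range.2 hnk)
          exact cos_le_cos_of_le_of_le_two_pi_sub_s5 (by positivity) (by nlinarith) (by nlinarith)
        · intro n hnk _
          have hnk : (n : ℝ) + 1 ≤ k := by exact_mod_cast mem_range.1 hnk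
          rw [← cos_abs (2 * x * n - θ)]
          refine cos_le_cos_of_nonneg_of_le_pi (abs_nonneg _) hkx (abs_le.2 ⟨?_, ?_⟩) <;>
            nlinarith
    _ ≤ sin (k * x) / sin x := sum_range_cos_le_sin_div_sin hx₀ hxπ hkx θ

theorem Finset.sum_nsmul_eq_sum_range_sum_filter_lt {ι M : Type*} [AddCommMonoid M]
    (s : Finset ι) (m : ι → ℕ) (f : ι → M) {N : ℕ} (hm : ∀ i ∈ s, m i ≤ N) :
    ∑ i ∈ s, m i • f i = ∑ u ∈ range N, ∑ i ∈ s with u < m i, f i := by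
  simp_rw [sum_filter]
  rw [sum_comm]
  refine sum_congr rfl fun i hi => ?_
  rw [← sum_filter, sum_const]
  congr
  have hrange : {u ∈ range N | u < m i} = range (m i) := by
    ext u
    simp only [mem_filter, mem_range]
    have := hm i hi
    omega
  rw [hrange, card_range]

theorem sum_sin_le_card_mul_sin_div {ι : Type*} (s : Finset ι) (hs : s.Nonempty) (t : ι → ℝ)
    (ht : ∀ i ∈ s, t i ∈ Set.Icc 0 π) : ∑ i ∈ s, sin (t i) ≤ #s * sin ((∑ i ∈ s, t i) / #s) := by
  have hs₀ : (0 : ℝ) < #s := by exact_mod_cast hs.card_pos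
  have hw : ∑ _i ∈ s, (#s : ℝ)⁻¹ = 1 := by simp [hs₀.ne']
  have := strictConcaveOn_sin_Icc.concaveOn.le_map_sum (fun _ _ => by positivity) hw ht
  simp only [smul_eq_mul, ← mul_sum] at this
  rw [inv_mul_eq_div, inv_mul_eq_div, div_le_iff₀ hs₀] at this
  linarith

theorem sum_sin_pi_mul_div_le {ι : Type*} [Fintype ι] [Nonempty ι] (a : ι → ℕ) {q : ℕ}
    (hq : ∑ i, a i = q) (hq₀ : 0 < q) :
    ∑ i, sin (π * a i / q) ≤ Fintype.card ι * sin (π / Fintype.card ι) := by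
  have hq' : (0 : ℝ) < q := by exact_mod_cast hq₀
  have hmem : ∀ i ∈ univ, π * a i / q ∈ Set.Icc 0 π := fun i _ =>
    ⟨by positivity, by
      rw [div_le_iff₀ hq']
      gcongr
      exact_mod_cast hq ▸ single_le_sum (fun j _ => Nat.zero_le (a j)) (mem_univ i)⟩
  have := sum_sin_le_card_mul_sin_div univ univ_nonempty _ hmem
  rwa [← sum_div, ← mul_sum, ← Nat.cast_sum, hq, mul_div_cancel_right₀ _ hq'.ne', card_univ] at this

namespace ZMod

variable {p : ℕ} [NeZero p]

theorem re_exp_mul_stdAddChar (θ : ℝ) (j : ZMod p) :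
    (Complex.exp (-θ * Complex.I) * stdAddChar j).re = cos (2 * (π / p) * j.val - θ) := by
  rw [stdAddChar_apply, toCircle_apply, ← Complex.exp_add]
  convert Complex.exp_ofReal_mul_I_re (2 * (π / p) * j.val - θ) using 3
  push_cast
  ring

theorem exp_mul_stdAddChar_sub_intCast (θ : ℝ) (a : ℤ) (j : ZMod p) :
    Complex.exp (-θ * Complex.I) * stdAddChar j =
      Complex.exp (-((θ - a • (2 * (π / p)) : ℝ) : ℂ) * Complex.I) *
        stdAddChar (j - (a : ZMod p)) := by
  rw [sub_eq_add_neg j, ← Int.cast_neg, AddChar.map_add_eq_mul, stdAddChar_coe, ← mul_assoc,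
    mul_right_comm, ← Complex.exp_add]
  congr 2
  push_cast [zsmul_eq_mul]
  ring

/-- Lev's bound on sums of distinct `p`-th roots of unity. -/
theorem norm_sum_stdAddChar_le (hp : 1 < p) (B : Finset (ZMod p)) :
    ‖∑ j ∈ B, stdAddChar j‖ ≤ sin (#B * (π / p)) / sin (π / p) := by
  set z := ∑ j ∈ B, stdAddChar j
  have h2x : 0 < 2 * (π / p) := by
    have : (0 : ℝ) < p := by exact_mod_cast NeZero.pos p
    positivity
  -- rotating `B` moves the phase of the sum into the window where the best arc is `0, …, #B - 1`
  set a := toIocDiv h2x ((#B - 2) * (π / p)) z.arg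
  set θ := toIocMod h2x ((#B - 2) * (π / p)) z.arg
  obtain ⟨hθ₁, hθ₂⟩ := toIocMod_mem_Ioc h2x ((#B - 2) * (π / p)) z.arg
  set B' := (B.map (Equiv.subRight (a : ZMod p)).toEmbedding).image val
  have hB' : #B' = #B := (card_image_of_injective _ (val_injective p)).trans (card_map _)
  calc ‖z‖ = (Complex.exp (-z.arg * Complex.I) * z).re := by
        conv_rhs => rw [← Complex.norm_mul_exp_arg_mul_I z, mul_left_comm, ← Complex.exp_add]
        simp
    _ = ∑ n ∈ B', cos (2 * (π / p) * n - θ) := by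
        rw [sum_image (val_injective p).injOn, sum_map, mul_sum, Complex.re_sum]
        refine sum_congr rfl fun j _ => ?_
        rw [exp_mul_stdAddChar_sub_intCast _ a, self_sub_toIocDiv_zsmul, re_exp_mul_stdAddChar]
        rfl
    _ ≤ sin (#B * (π / p)) / sin (π / p) := by
        rw [← hB']
        refine sum_cos_le_sin_div_sin hp (fun n hn => ?_) (by rw [hB']; linarith)
          (by rw [hB']; linarith)
        obtain ⟨j, -, rfl⟩ := mem_image.1 hn
        exact mem_range.2 (val_lt j)

theorem norm_sum_nsmul_stdAddChar_le (hp : 1 < p) {N : ℕ} (hN : 0 < N) (m : ZMod p → ℕ)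
    (hm : ∀ j, m j ≤ N) :
    ‖∑ j, m j • stdAddChar j‖ ≤ N * sin ((∑ j, m j) * (π / p) / N) / sin (π / p) := by
  have hp₀ : (0 : ℝ) < p := by exact_mod_cast NeZero.pos p
  set B : ℕ → Finset (ZMod p) := fun u => {j | u < m j}
  have hcard : ∑ u ∈ range N, #(B u) = ∑ j, m j := by
    have := sum_nsmul_eq_sum_range_sum_filter_lt univ m (fun _ => 1) fun j _ => hm j
    simp only [smul_eq_mul, mul_one, ← card_eq_sum_ones] at this
    exact this.symm
  have hB : ∀ u, (#(B u) : ℝ) * (π / p) ∈ Set.Icc 0 π := fun u =>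
    ⟨by positivity, by
      rw [mul_div_assoc', div_le_iff₀ hp₀, mul_comm π]
      gcongr
      exact_mod_cast (card_le_univ _).trans (ZMod.card p).le⟩
  rw [sum_nsmul_eq_sum_range_sum_filter_lt univ m _ fun j _ => hm j]
  calc ‖∑ u ∈ range N, ∑ j ∈ B u, stdAddChar j‖
      ≤ ∑ u ∈ range N, sin (#(B u) * (π / p)) / sin (π / p) :=
        (norm_sum_le _ _).trans (sum_le_sum fun u _ => norm_sum_stdAddChar_le hp (B u))
    _ ≤ N * sin ((∑ j, m j) * (π / p) / N) / sin (π / p) := by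
        rw [← sum_div]
        have := sin_pi_div_natCast_pos hp
        gcongr
        have := sum_sin_le_card_mul_sin_div (range N) (nonempty_range_iff.2 hN.ne') _
          fun u _ => hB u
        rwa [← sum_mul, card_range, ← Nat.cast_sum, hcard] at this

end ZMod

theorem chr_eq_stdAddChar (p : ℕ) [Fact p.Prime] (K : Type*) [Field K] [Algebra (ZMod p) K]
    (x : K) : chr p K x = ZMod.stdAddChar (Algebra.trace (ZMod p) K x) := by
  rw [chr, ZMod.stdAddChar_apply, ZMod.toCircle_apply, omg, ← Complex.exp_nat_mul]
  congr 1
  ring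

section Fourier

variable {p : ℕ} [Fact p.Prime] {K : Type*} [Field K] [Fintype K] [Algebra (ZMod p) K]

theorem ihat_eq_sum_card_fiber_smul (A : Finset K) (α : K) :
    ihat p K A α = (Fintype.card K : ℂ)⁻¹ *
      ∑ j, #{x ∈ A | Algebra.trace (ZMod p) K (α * x) = j} • ZMod.stdAddChar j := by
  rw [ihat, one_div]
  congr 1
  simp_rw [ite_mul, one_mul, zero_mul, ← sum_filter, filter_mem_eq_inter, univ_inter,
    chr_eq_stdAddChar, ← sum_fiberwise A (fun x => Algebra.trace (ZMod p) K (α * x))]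
  refine sum_congr rfl fun j _ => ?_
  rw [sum_congr rfl fun x hx => by rw [(mem_filter.1 hx).2], sum_const]

theorem card_filter_trace_mul_eq {α : K} (hα : α ≠ 0) (j : ZMod p) :
    p * #{x | Algebra.trace (ZMod p) K (α * x) = j} = Fintype.card K := by
  set L : K →+ ZMod p :=
    (Algebra.trace (ZMod p) K).toAddMonoidHom.comp (AddMonoidHom.mulLeft α)
  have hL : ∀ j, j ∈ Set.range L := fun j => by
    obtain ⟨y, rfl⟩ := Algebra.trace_surjective (ZMod p) K j
    exact ⟨α⁻¹ * y, by simp [L, mul_inv_cancel_left₀ hα]⟩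
  have hcard := card_eq_sum_card_fiberwise (f := L) (s := univ) (t := univ)
    fun _ _ => mem_coe.2 (mem_univ _)
  rw [card_univ, sum_congr rfl fun j' _ => AddMonoidHom.card_fiber_eq_of_mem_range L (hL j') (hL j),
    sum_const, card_univ, ZMod.card, smul_eq_mul] at hcard
  exact hcard.symm

theorem norm_ihat_le {α : K} (hα : α ≠ 0) (A : Finset K) :
    ‖ihat p K A α‖ ≤ sin (π * #A / Fintype.card K) / (p * sin (π / p)) := by
  have hp := (Fact.out : p.Prime).one_lt
  set N := #{x | Algebra.trace (ZMod p) K (α * x) = 0}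
  have hN : p * N = Fintype.card K := card_filter_trace_mul_eq hα 0
  set m : ZMod p → ℕ := fun j => #{x ∈ A | Algebra.trace (ZMod p) K (α * x) = j}
  have hm : ∀ j, m j ≤ N := fun j => by
    rw [Nat.eq_of_mul_eq_mul_left (NeZero.pos p) (hN.trans (card_filter_trace_mul_eq hα j).symm)]
    exact card_le_card (filter_subset_filter _ (subset_univ A))
  have hmA : ∑ j, m j = #A :=
    (card_eq_sum_card_fiberwise fun _ _ => mem_coe.2 (mem_univ _)).symm
  have hN₀ : 0 < N := Nat.pos_of_mul_pos_left (hN ▸ Fintype.card_pos)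
  rw [ihat_eq_sum_card_fiber_smul, norm_mul, norm_inv, Complex.norm_natCast, ← hN]
  calc ((p * N : ℕ) : ℝ)⁻¹ * ‖∑ j, m j • ZMod.stdAddChar j‖
      ≤ ((p * N : ℕ) : ℝ)⁻¹ * (N * sin (#A * (π / p) / N) / sin (π / p)) := by
        gcongr
        exact_mod_cast hmA ▸ ZMod.norm_sum_nsmul_stdAddChar_le hp hN₀ m hm
    _ = sin (π * #A / (p * N : ℕ)) / (p * sin (π / p)) := by
        have : (N : ℝ) ≠ 0 := by exact_mod_cast hN₀.ne'
        push_cast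
        field_simp

theorem ihat_zero (A : Finset K) : ihat p K A 0 = #A / Fintype.card K := by
  simp [ihat, chr, div_eq_inv_mul]

end Fourier

theorem stmt5_general (p w μ : ℕ) [Fact p.Prime]
    (K : Type) [Field K] [Fintype K] [Algebra (ZMod p) K]
    (hK : Fintype.card K = p ^ w)
    (A : Fin (2 ^ μ) → Finset K)
    (hA : ∑ i, (A i).card = p ^ w) :
    (∀ α : K, α ≠ 0 →
      ∑ i, ‖ihat p K (A i) α‖
        ≤ (2 : ℝ) ^ μ * Real.sin (Real.pi / 2 ^ μ) / (p * Real.sin (Real.pi / p))) ∧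
    ∑ i, ‖ihat p K (A i) 0‖ = 1 := by
  have hq₀ : (0 : ℝ) < Fintype.card K := by exact_mod_cast Fintype.card_pos
  have hq : ∑ i, #(A i) = Fintype.card K := hA.trans hK.symm
  refine ⟨fun α hα => ?_, ?_⟩
  · have hjensen := sum_sin_pi_mul_div_le (fun i => #(A i)) hq Fintype.card_pos
    rw [Fintype.card_fin] at hjensen
    calc ∑ i, ‖ihat p K (A i) α‖
        ≤ ∑ i, sin (π * #(A i) / Fintype.card K) / (p * sin (π / p)) :=
          sum_le_sum fun i _ => norm_ihat_le hα (A i)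
      _ ≤ (2 : ℝ) ^ μ * sin (π / 2 ^ μ) / (p * sin (π / p)) := by
          rw [← sum_div]
          have := sin_pi_div_natCast_pos (Fact.out : p.Prime).one_lt
          gcongr
          exact_mod_cast hjensen
  · simp_rw [ihat_zero, norm_div, Complex.norm_natCast, ← sum_div]
    rw [← Nat.cast_sum, hq, div_self hq₀.ne']

/-- for sets `A₁,…,A_{2^μ} ⊆ K` with `∑|A_i| = p^w`,
`∑_i |1̂_{A_i}(α)| ≤ c_μ` for all nonzero `α`, and `∑_i |1̂_{A_i}(0)| = 1`. -/
theorem stmt5 (p w μ : ℕ) [Fact p.Prime] (hw : 1 ≤ w) (hμ : 1 ≤ μ)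
    (K : Type) [Field K] [Fintype K] [Algebra (ZMod p) K]
    (hK : Fintype.card K = p ^ w)
    (A : Fin (2 ^ μ) → Finset K)
    (hA : ∑ i, (A i).card = p ^ w) :
    (∀ α : K, α ≠ 0 →
      ∑ i, ‖ihat p K (A i) α‖
        ≤ (2 : ℝ) ^ μ * Real.sin (Real.pi / 2 ^ μ) / (p * Real.sin (Real.pi / p))) ∧
    ∑ i, ‖ihat p K (A i) 0‖ = 1 :=
  stmt5_general p w μ K hK A hA
end

section
/- Let C ⊆ F_{p^w}^n be a linear code of dimension k with dual distance d^⊥, and τ = (τ⁽¹⁾,…,τ⁽ⁿ⁾) any family of functions τ⁽ʲ⁾ : F_{p^w} → F_2^μ. Then the statistical distance between the distribution of (τ⁽¹⁾(x₁),…,τ⁽ⁿ⁾(x_n)) for x uniform in C and for x uniform in F_{p^w}^n equals (1/2)·∑_{ℓ∈(F_2^μ)^n} |∑_{α∈C^⊥∖{0}} ∏_{j=1}^n 1̂_{ℓ_j}(α_j)|, where 1_{ℓ_j} is the indicator of (τ⁽ʲ⁾)^{−1}(ℓ_j). -/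
open Finset Classical

open Classical in
/-- Probability that coordinatewise leakage `τ` of a uniform element of `SF ⊆ K^n`
equals `ℓ`. -/
noncomputable def leakProb {K : Type*} [Fintype K] {n μ : ℕ}
    (τ : Fin n → K → (Fin μ → ZMod 2)) (SF : Finset (Fin n → K))
    (ℓ : Fin n → (Fin μ → ZMod 2)) : ℝ :=
  ((SF.filter fun x => ∀ j, τ j (x j) = ℓ j).card : ℝ) / SF.card

/-! Expanding each indicator `1_{ℓ_j}` in its Fourier series turns the number of `x ∈ S` with
leakage `ℓ` into `∑_β (∏_j 1̂_{ℓ_j}(β_j)) ∑_{x ∈ S} ψ(-β ⬝ x)`, where `ψ = ω_p^{Tr(·)}` is a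
primitive additive character of `K`. For `S = C` the inner sum is `|C|` when `β ∈ C^⊥` and `0`
otherwise, since `x ↦ ψ(-β ⬝ x)` is a character of `C` that is trivial exactly on `C^⊥`. So the
leakage distribution of a uniform codeword is `∑_{β ∈ C^⊥} ∏_j 1̂_{ℓ_j}(β_j)`; for `S = K^n` only
`β = 0` survives, and the difference of the two is the sum over `C^⊥ ∖ {0}`. -/

lemma AddChar.map_sum_eq_prod {A M ι : Type*} [AddCommMonoid A] [CommMonoid M]
    (ψ : AddChar A M) (s : Finset ι) (f : ι → A) :
    ψ (∑ i ∈ s, f i) = ∏ i ∈ s, ψ (f i) := by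
  induction s using Finset.cons_induction with
  | empty => simp
  | cons a s ha ih => rw [sum_cons, prod_cons, AddChar.map_add_eq_mul, ih]

section TraceCharacter

variable (p : ℕ) [Fact p.Prime]

lemma isPrimitiveRoot_omg : IsPrimitiveRoot (omg p) p :=
  Complex.isPrimitiveRoot_exp p (Fact.out : p.Prime).ne_zero

variable (K : Type*) [Field K] [Algebra (ZMod p) K]

noncomputable def traceChar : AddChar K ℂ :=
  (AddChar.zmodChar p (isPrimitiveRoot_omg p).pow_eq_one).compAddMonoidHom
    (Algebra.trace (ZMod p) K).toAddMonoidHom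

lemma traceChar_apply (x : K) : traceChar p K x = chr p K x := rfl

lemma traceChar_isPrimitive [Finite K] : (traceChar p K).IsPrimitive := by
  have : FiniteDimensional (ZMod p) K := Module.Finite.of_finite
  refine AddChar.IsPrimitive.of_ne_one fun h => ?_
  obtain ⟨x, hx⟩ := Algebra.trace_surjective (ZMod p) K 1
  have : omg p ^ (1 : ZMod p).val = 1 := by
    rw [← hx, ← chr, ← traceChar_apply, h, AddChar.one_apply]
  rw [ZMod.val_one] at this
  exact (isPrimitiveRoot_omg p).pow_ne_one_of_pos_of_lt one_ne_zero
    (Fact.out : p.Prime).one_lt (by simpa using this)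

end TraceCharacter

section Fourier

variable (p : ℕ) [Fact p.Prime] (K : Type*) [Field K] [Fintype K] [Algebra (ZMod p) K]

lemma ite_mem_eq_sum_ihat_mul_traceChar (A : Finset K) (y : K) :
    (if y ∈ A then (1 : ℂ) else 0) = ∑ β : K, ihat p K A β * traceChar p K (-(β * y)) := by
  have hshift (x β : K) :
      traceChar p K (β * x) * traceChar p K (-(β * y)) = traceChar p K (β * (x - y)) := by
    rw [← AddChar.map_add_eq_mul]; ring_nf
  calc (if y ∈ A then (1 : ℂ) else 0)
      = 1 / (Fintype.card K : ℂ) * ∑ x : K,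
          (if x ∈ A then 1 else 0) * (if x - y = 0 then (Fintype.card K : ℂ) else 0) := by
        rw [sum_eq_single y (fun x _ hx => by simp [sub_eq_zero, hx]) (by simp)]
        split_ifs <;> simp_all
    _ = 1 / (Fintype.card K : ℂ) * ∑ x : K,
          (if x ∈ A then 1 else 0) * ∑ β : K, traceChar p K (β * (x - y)) := by
        simp_rw [AddChar.sum_mulShift _ (traceChar_isPrimitive p K), Nat.cast_ite, Nat.cast_zero]
    _ = ∑ β : K, ihat p K A β * traceChar p K (-(β * y)) := by
        simp_rw [ihat, ← traceChar_apply, ← hshift, mul_sum, sum_mul]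
        rw [sum_comm]
        refine sum_congr rfl fun x _ => sum_congr rfl fun β _ => by ring

end Fourier

lemma AddChar.IsPrimitive.sum_apply_dotProduct {K R ι : Type*} [CommRing K] [Fintype K]
    [Fintype ι] [CommRing R] [IsDomain R] {ψ : AddChar K R} (hψ : ψ.IsPrimitive)
    (C : Submodule K (ι → K)) (CF : Finset (ι → K)) (hCF : ∀ x, x ∈ CF ↔ x ∈ C) (β : ι → K) :
    ∑ x ∈ CF, ψ (β ⬝ᵥ x) = if ∀ c ∈ C, c ⬝ᵥ β = 0 then (CF.card : R) else 0 := by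
  let dot : C →+ K :=
    { toFun := fun c => β ⬝ᵥ c, map_zero' := dotProduct_zero β,
      map_add' := fun a b => dotProduct_add β a b }
  have htriv : ψ.compAddMonoidHom dot = 0 ↔ ∀ c ∈ C, c ⬝ᵥ β = 0 := by
    refine ⟨fun h c hc => ?_, fun h => DFunLike.ext _ _ fun c => ?_⟩
    · by_contra ht
      refine hψ ht (DFunLike.ext _ _ fun u => ?_)
      have := DFunLike.congr_fun h ⟨u • c, C.smul_mem u hc⟩
      simpa [dot, dotProduct_comm c β, mul_comm] using this
    · simp [dot, dotProduct_comm β, h c c.2]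
  rw [sum_subtype CF hCF, ← Fintype.card_of_subtype CF hCF]
  exact (ψ.compAddMonoidHom dot).sum_eq_ite.trans (if_congr htriv rfl rfl)

section Leakage

variable (p : ℕ) [Fact p.Prime] (K : Type*) [Field K] [Fintype K] [Algebra (ZMod p) K]
  {n μ : ℕ} (τ : Fin n → K → (Fin μ → ZMod 2)) (ℓ : Fin n → (Fin μ → ZMod 2))

lemma card_filter_leak_eq_sum (S : Finset (Fin n → K)) :
    ((S.filter fun x => ∀ j, τ j (x j) = ℓ j).card : ℂ)
      = ∑ β : Fin n → K, (∏ j, ihat p K (univ.filter fun x => τ j x = ℓ j) (β j)) *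
          ∑ x ∈ S, traceChar p K (-β ⬝ᵥ x) := by
  calc ((S.filter fun x => ∀ j, τ j (x j) = ℓ j).card : ℂ)
      = ∑ x ∈ S, ∏ j, if x j ∈ univ.filter (fun y => τ j y = ℓ j) then (1 : ℂ) else 0 := by
        rw [card_filter]
        push_cast
        refine sum_congr rfl fun x _ => ?_
        rw [prod_boole]
        simp
    _ = ∑ x ∈ S, ∑ β : Fin n → K, ∏ j,
          ihat p K (univ.filter fun y => τ j y = ℓ j) (β j) * traceChar p K (-(β j * x j)) := by
        simp_rw [ite_mem_eq_sum_ihat_mul_traceChar p K, prod_univ_sum, Fintype.piFinset_univ]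
    _ = ∑ β : Fin n → K, (∏ j, ihat p K (univ.filter fun x => τ j x = ℓ j) (β j)) *
          ∑ x ∈ S, traceChar p K (-β ⬝ᵥ x) := by
        rw [sum_comm]
        simp_rw [mul_sum, prod_mul_distrib, dotProduct, AddChar.map_sum_eq_prod, Pi.neg_apply,
          neg_mul]

lemma leakProb_eq_sum_dual (C : Submodule K (Fin n → K)) (CF DF : Finset (Fin n → K))
    (hCF : ∀ x, x ∈ CF ↔ x ∈ C) (hDF : ∀ y, y ∈ DF ↔ ∀ c ∈ C, c ⬝ᵥ y = 0) :
    (leakProb τ CF ℓ : ℂ) = ∑ β ∈ DF, ∏ j, ihat p K (univ.filter fun x => τ j x = ℓ j) (β j) := by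
  have hCF_card : (CF.card : ℂ) ≠ 0 :=
    Nat.cast_ne_zero.2 (card_ne_zero_of_mem ((hCF 0).2 C.zero_mem))
  rw [leakProb, Complex.ofReal_div, Complex.ofReal_natCast, Complex.ofReal_natCast,
    div_eq_iff hCF_card, card_filter_leak_eq_sum p K, sum_mul]
  simp_rw [(traceChar_isPrimitive p K).sum_apply_dotProduct C CF hCF, dotProduct_neg, neg_eq_zero,
    ← hDF, mul_ite, mul_zero, ← sum_filter, filter_mem_eq_inter, univ_inter]

end Leakage

open Classical in
theorem stmt8_general (p n μ : ℕ) [Fact p.Prime]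
    (K : Type) [Field K] [Fintype K] [Algebra (ZMod p) K]
    (C : Submodule K (Fin n → K))
    (CF DF : Finset (Fin n → K))
    (hCF : ∀ x, x ∈ CF ↔ x ∈ C)
    (hDF : ∀ y, y ∈ DF ↔ ∀ c ∈ C, ∑ i, c i * y i = 0)
    (τ : Fin n → K → (Fin μ → ZMod 2)) :
    (1 / 2 : ℝ) * ∑ ℓ : Fin n → (Fin μ → ZMod 2),
        |leakProb τ CF ℓ - leakProb τ Finset.univ ℓ|
      = (1 / 2 : ℝ) * ∑ ℓ : Fin n → (Fin μ → ZMod 2),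
          ‖(∑ α ∈ DF.erase 0,
            ∏ j, ihat p K (Finset.univ.filter fun x : K => τ j x = ℓ j) (α j))‖ := by
  congr 1
  refine sum_congr rfl fun ℓ _ => ?_
  have hC := leakProb_eq_sum_dual p K τ ℓ C CF DF hCF hDF
  have hU := leakProb_eq_sum_dual p K τ ℓ ⊤ univ {0} (by simp)
    (fun y => by simp [dotProduct_comm _ y, dotProduct_eq_zero_iff])
  rw [sum_singleton] at hU
  rw [sum_erase_eq_sub ((hDF 0).2 fun c _ => dotProduct_zero c), ← hC, ← hU,
    ← Complex.ofReal_sub, Complex.norm_real, Real.norm_eq_abs]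

open Classical in
/-- the statistical distance between leakage of a uniform codeword of `C`
and leakage of a uniform vector equals
`(1/2)·∑_ℓ |∑_{α∈C^⊥∖{0}} ∏_j 1̂_{ℓ_j}(α_j)|`. -/
theorem stmt8 (p w n μ k : ℕ) [Fact p.Prime] (hw : 1 ≤ w)
    (K : Type) [Field K] [Fintype K] [Algebra (ZMod p) K]
    (hK : Fintype.card K = p ^ w)
    (C : Submodule K (Fin n → K)) (hk : Module.finrank K C = k)
    (CF DF : Finset (Fin n → K))
    (hCF : ∀ x, x ∈ CF ↔ x ∈ C)
    (hDF : ∀ y, y ∈ DF ↔ ∀ c ∈ C, ∑ i, c i * y i = 0)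
    (τ : Fin n → K → (Fin μ → ZMod 2)) :
    (1 / 2 : ℝ) * ∑ ℓ : Fin n → (Fin μ → ZMod 2),
        |leakProb τ CF ℓ - leakProb τ Finset.univ ℓ|
      = (1 / 2 : ℝ) * ∑ ℓ : Fin n → (Fin μ → ZMod 2),
          ‖(∑ α ∈ DF.erase 0,
            ∏ j, ihat p K (Finset.univ.filter fun x : K => τ j x = ℓ j) (α j))‖ :=
  stmt8_general p n μ K C CF DF hCF hDF τ
end
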